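/- Fix 1 ≤ ℓ ≤ N and words ξ = (ξ_ℓ,…,ξ_N) and b = (b_ℓ,…,b_N) of strictly positive reals. Define ξ' = (ξ'_ℓ,…,ξ'_N) and b' = (b'_{ℓ+1},…,b'_N) by geometric row insertion: ξ'_ℓ = b_ℓ ξ_ℓ, ξ'_k = b_k(ξ'_{k−1} + ξ_k) for ℓ+1 ≤ k ≤ N, and b'_k = b_k · ξ_k ξ'_{k−1} / (ξ_{k−1} ξ'_k) for ℓ+1 ≤ k ≤ N. Define B : ℤ_{≥ℓ} → (0,∞) by B(k) = ∏_{j=ℓ}^{k} b_j and regard ξ as the function ξ(k) = ξ_k on ⟦ℓ,N⟧. Then ξ'_k = (ξ⊙B)(k) for all k ∈ ⟦ℓ,N⟧, and ∏_{j=ℓ+1}^{k} b'_j = (B⊗ξ)(k) for all k ∈ ⟦ℓ+1,N⟧. In particular, geometric row insertion coincides with the discrete geometric Pitman transform. -/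

import Mathlib

open scoped BigOperators

/-- Value of `f : ℤ_{≥ r} → ℝ`, with the convention that values below the domain base
`r` equal `1`. -/
noncomputable def clo (r : ℤ) (f : ℤ → ℝ) (y : ℤ) : ℝ := if y < r then 1 else f y

/-- The sum `Σ_{m=r}^{x} g(m)/f(m−1)` with the convention `f(r−1) = 1`. -/
noncomputable def pitSum (r : ℤ) (f g : ℤ → ℝ) (x : ℤ) : ℝ :=
  ∑ m ∈ Finset.Icc r x, g m / clo r f (m - 1)

/-- `(g ⊙ f)(x) = f(x) · Σ_{m=r}^{x} g(m)/f(m−1)`, for `f, g : ℤ_{≥r} → (0,∞)`. -/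
noncomputable def odot (r : ℤ) (g f : ℤ → ℝ) : ℤ → ℝ := fun x => f x * pitSum r f g x

/-- `(f ⊗ g)(x) = g(x) · (Σ_{m=r}^{x} g(m)/f(m−1))⁻¹`, for `f, g : ℤ_{≥r} → (0,∞)`. -/
noncomputable def otimes (r : ℤ) (f g : ℤ → ℝ) : ℤ → ℝ := fun x => g x * (pitSum r f g x)⁻¹

/-!
The recursion `ξ'_k = b_k (ξ'_{k-1} + ξ_k)` is the first-order linear recursion solved by
`ξ' = B · Σ ξ(m)/B(m-1)`, i.e. by `ξ ⊙ B`. The weights `b'_k` are `b_k` times the ratio of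
consecutive values of `ξ/ξ'`, so their product telescopes to `B ξ / ξ' = B ξ / (ξ ⊙ B)`, which
is `B ⊗ ξ`.
-/

open Finset

theorem Int.prod_Icc_succ_top {M : Type*} [CommMonoid M] (f : ℤ → M) {a x : ℤ}
    (h : a ≤ x + 1) : ∏ j ∈ Icc a (x + 1), f j = (∏ j ∈ Icc a x, f j) * f (x + 1) := by
  rw [← insert_Icc_right_eq_Icc_add_one h, prod_insert (by simp), mul_comm]

theorem Finset.prod_Icc_ne_zero {α M : Type*} [Preorder α] [LocallyFiniteOrder α]
    [CommMonoidWithZero M] [Nontrivial M] [NoZeroDivisors M] {f : α → M} {a N : α}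
    (hf : ∀ j, a ≤ j → j ≤ N → f j ≠ 0) {x : α} (hx : x ≤ N) : ∏ j ∈ Icc a x, f j ≠ 0 :=
  prod_ne_zero_iff.mpr fun j hj => hf j (mem_Icc.1 hj).1 ((mem_Icc.1 hj).2.trans hx)

section Pitman

variable (r : ℤ) (f g : ℤ → ℝ)

theorem clo_of_le {y : ℤ} (h : r ≤ y) : clo r f y = f y := if_neg (not_lt.2 h)

theorem clo_of_lt {y : ℤ} (h : y < r) : clo r f y = 1 := if_pos h

theorem pitSum_self : pitSum r f g r = g r := by
  rw [pitSum, Icc_self, sum_singleton, clo_of_lt r f (by omega), div_one]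

theorem pitSum_add_one {x : ℤ} (hx : r ≤ x) :
    pitSum r f g (x + 1) = pitSum r f g x + g (x + 1) / f x := by
  rw [pitSum, pitSum, ← insert_Icc_right_eq_Icc_add_one (by omega), sum_insert (by simp),
    add_sub_cancel_right, clo_of_le r f hx, add_comm]

theorem odot_self : odot r g f r = f r * g r := by
  rw [odot, pitSum_self]

theorem odot_add_one {x : ℤ} (hx : r ≤ x) (hf : f x ≠ 0) :
    odot r g f (x + 1) = f (x + 1) / f x * (odot r g f x + g (x + 1)) := by
  simp only [odot, pitSum_add_one r f g hx]
  field_simp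

theorem otimes_eq_mul_div_odot {x : ℤ} (hf : f x ≠ 0) :
    otimes r f g x = f x * g x / odot r g f x := by
  rw [otimes, odot, mul_div_mul_left _ _ hf, div_eq_mul_inv]

end Pitman

section RowInsertion

variable {ℓ N : ℤ} {ξ b ξ' b' : ℤ → ℝ}

theorem rowInsertion_pos (hξ : ∀ x, ℓ ≤ x → x ≤ N → 0 < ξ x)
    (hb : ∀ x, ℓ ≤ x → x ≤ N → 0 < b x) (h1 : ξ' ℓ = b ℓ * ξ ℓ)
    (h2 : ∀ x, ℓ + 1 ≤ x → x ≤ N → ξ' x = b x * (ξ' (x - 1) + ξ x)) :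
    ∀ x, ℓ ≤ x → x ≤ N → 0 < ξ' x := by
  intro x hx
  induction x, hx using Int.leInduction with
  | base => exact fun hN => h1 ▸ mul_pos (hb ℓ le_rfl hN) (hξ ℓ le_rfl hN)
  | succ n hn ih =>
    intro hnN
    rw [h2 (n + 1) (by omega) hnN, add_sub_cancel_right]
    exact mul_pos (hb _ (by omega) hnN) (add_pos (ih (by omega)) (hξ _ (by omega) hnN))

theorem rowInsertion_eq_odot (hb : ∀ x, ℓ ≤ x → x ≤ N → b x ≠ 0) (h1 : ξ' ℓ = b ℓ * ξ ℓ)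
    (h2 : ∀ x, ℓ + 1 ≤ x → x ≤ N → ξ' x = b x * (ξ' (x - 1) + ξ x)) :
    ∀ x, ℓ ≤ x → x ≤ N → ξ' x = odot ℓ ξ (fun y => ∏ j ∈ Icc ℓ y, b j) x := by
  intro x hx
  induction x, hx using Int.leInduction with
  | base => intro; rw [odot_self, Icc_self, prod_singleton, h1]
  | succ n hn ih =>
    intro hnN
    have hBn := prod_Icc_ne_zero hb (show n ≤ N by omega)
    rw [odot_add_one _ _ _ hn hBn, ← ih (by omega), Int.prod_Icc_succ_top _ (by omega),
      mul_div_cancel_left₀ _ hBn, h2 (n + 1) (by omega) hnN, add_sub_cancel_right]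

theorem prod_rowInsertion_weights (hξ : ∀ x, ℓ ≤ x → x ≤ N → ξ x ≠ 0)
    (hξ' : ∀ x, ℓ ≤ x → x ≤ N → ξ' x ≠ 0) (h1 : ξ' ℓ = b ℓ * ξ ℓ)
    (h3 : ∀ x, ℓ + 1 ≤ x → x ≤ N → b' x = b x * (ξ x * ξ' (x - 1)) / (ξ (x - 1) * ξ' x)) :
    ∀ x, ℓ ≤ x → x ≤ N →
      ∏ j ∈ Icc (ℓ + 1) x, b' j = (∏ j ∈ Icc ℓ x, b j) * ξ x / ξ' x := by
  intro x hx
  induction x, hx using Int.leInduction with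
  | base =>
    intro hN
    rw [Icc_eq_empty (by omega), prod_empty, Icc_self, prod_singleton, ← h1,
      div_self (hξ' ℓ le_rfl hN)]
  | succ n hn ih =>
    intro hnN
    have hξn := hξ n hn (by omega)
    have hξ'n := hξ' n hn (by omega)
    have hξ'n1 := hξ' (n + 1) (by omega) hnN
    rw [Int.prod_Icc_succ_top _ (by omega), ih (by omega), h3 (n + 1) (by omega) hnN,
      add_sub_cancel_right, Int.prod_Icc_succ_top _ (by omega)]
    field_simp

end RowInsertion

theorem row_insertion_eq_pitman_general (ℓ N : ℤ)
    (ξ b : ℤ → ℝ)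
    (hξ : ∀ x : ℤ, ℓ ≤ x → x ≤ N → 0 < ξ x) (hb : ∀ x : ℤ, ℓ ≤ x → x ≤ N → 0 < b x)
    (ξ' b' : ℤ → ℝ)
    (h1 : ξ' ℓ = b ℓ * ξ ℓ)
    (h2 : ∀ x : ℤ, ℓ + 1 ≤ x → x ≤ N → ξ' x = b x * (ξ' (x - 1) + ξ x))
    (h3 : ∀ x : ℤ, ℓ + 1 ≤ x → x ≤ N →
      b' x = b x * (ξ x * ξ' (x - 1)) / (ξ (x - 1) * ξ' x)) :
    (∀ x : ℤ, ℓ ≤ x → x ≤ N →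
        ξ' x = odot ℓ ξ (fun y => ∏ j ∈ Finset.Icc ℓ y, b j) x) ∧
    (∀ x : ℤ, ℓ + 1 ≤ x → x ≤ N →
        (∏ j ∈ Finset.Icc (ℓ + 1) x, b' j)
          = otimes ℓ (fun y => ∏ j ∈ Finset.Icc ℓ y, b j) ξ x) := by
  have hb₀ : ∀ x, ℓ ≤ x → x ≤ N → b x ≠ 0 := fun x hx hxN => (hb x hx hxN).ne'
  have hξ'pos := rowInsertion_pos hξ hb h1 h2
  have hodot := rowInsertion_eq_odot hb₀ h1 h2
  refine ⟨hodot, fun x hx hxN => ?_⟩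
  rw [otimes_eq_mul_div_odot _ _ _ (prod_Icc_ne_zero hb₀ hxN), ← hodot x (by omega) hxN]
  exact prod_rowInsertion_weights (fun x hx hxN => (hξ x hx hxN).ne')
    (fun x hx hxN => (hξ'pos x hx hxN).ne') h1 h3 x (by omega) hxN

/-- **Lemma 2.12: geometric row insertion coincides with the discrete geometric Pitman
transform.** With `ξ', b'` produced from `(ξ, b)` by geometric row insertion and
`B(x) = ∏_{j=ℓ}^{x} b_j`, one has `ξ'_x = (ξ⊙B)(x)` for `ℓ ≤ x ≤ N` and
`∏_{j=ℓ+1}^{x} b'_j = (B⊗ξ)(x)` for `ℓ+1 ≤ x ≤ N`. -/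
theorem row_insertion_eq_pitman (ℓ N : ℤ) (hℓ : 1 ≤ ℓ) (hN : ℓ ≤ N)
    (ξ b : ℤ → ℝ)
    (hξ : ∀ x : ℤ, ℓ ≤ x → x ≤ N → 0 < ξ x) (hb : ∀ x : ℤ, ℓ ≤ x → x ≤ N → 0 < b x)
    (ξ' b' : ℤ → ℝ)
    (h1 : ξ' ℓ = b ℓ * ξ ℓ)
    (h2 : ∀ x : ℤ, ℓ + 1 ≤ x → x ≤ N → ξ' x = b x * (ξ' (x - 1) + ξ x))
    (h3 : ∀ x : ℤ, ℓ + 1 ≤ x → x ≤ N →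
      b' x = b x * (ξ x * ξ' (x - 1)) / (ξ (x - 1) * ξ' x)) :
    (∀ x : ℤ, ℓ ≤ x → x ≤ N →
        ξ' x = odot ℓ ξ (fun y => ∏ j ∈ Finset.Icc ℓ y, b j) x) ∧
    (∀ x : ℤ, ℓ + 1 ≤ x → x ≤ N →
        (∏ j ∈ Finset.Icc (ℓ + 1) x, b' j)
          = otimes ℓ (fun y => ∏ j ∈ Finset.Icc ℓ y, b j) ξ x) :=
  row_insertion_eq_pitman_general ℓ N ξ b hξ hb ξ' b' h1 h2 h3
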